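/- arXiv:2502.18159 — 4 statements merged into one kernel-verified Lean document; each statement's English description precedes it below -/
import Mathlib

section
/- Let T_i ~ Exp(i) be independent for i = 1,…,n, let κ_n be independent of the T_i with P(κ_n = k) = (2(n+1)/(n-1))/((k+1)(k+2)) for k = 1,…,n-1, and define τ^{(n)} = Σ_{i=κ_n+1}^{n} T_i. Then E[τ^{(n)}] = ((n+1)/(n-1)) H_{n,1} − 2n/(n-1). -/
/-!
Conditioning on the independent index `κ`, the expectation is `∑ₖ P(κ = k) ∑_{i > k} 1/i`, because
`Exp(i)` has mean `1/i` (the Gamma mean `a/r` with `a = 1`). The weights `2/((k+1)(k+2))` telescope,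
`∑_{k ≤ m} 2/((k+1)(k+2)) = m/(m+2)`, and with this an induction on `n` evaluates the double sum as
`H_{n,1} - 2n/(n+1)`.
-/

open MeasureTheory ProbabilityTheory Finset Real

lemma integral_id_gammaMeasure {a r : ℝ} (ha : 0 < a) (hr : 0 < r) :
    ∫ x, x ∂gammaMeasure a r = a / r := by
  have hpdf : ∀ x, (gammaPDF a r x).toReal = gammaPDFReal a r x :=
    fun x => ENNReal.toReal_ofReal (gammaPDFReal_nonneg ha hr x)
  rw [gammaMeasure, integral_withDensity_eq_integral_toReal_smul
    (show Measurable (gammaPDF a r) from (measurable_gammaPDFReal a r).ennreal_ofReal)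
    (ae_of_all _ fun _ => ENNReal.ofReal_lt_top)]
  simp_rw [hpdf, smul_eq_mul]
  calc ∫ x, gammaPDFReal a r x * x
      = ∫ x in Set.Ioi 0, r ^ a / Gamma a * (x ^ ((a + 1) - 1) * exp (-(r * x))) := by
        rw [← setIntegral_eq_integral_of_forall_compl_eq_zero (s := Set.Ioi 0)]
        · refine setIntegral_congr_fun measurableSet_Ioi fun x (hx : 0 < x) => ?_
          rw [gammaPDFReal, if_pos hx.le, add_sub_cancel_right, rpow_sub_one hx.ne']
          field_simp
        · intro x (hx : ¬ 0 < x)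
          rcases (not_lt.mp hx).lt_or_eq with hneg | rfl
          · rw [gammaPDFReal, if_neg (not_le.mpr hneg), zero_mul]
          · rw [mul_zero]
    _ = r ^ a / Gamma a * ((1 / r) ^ (a + 1) * Gamma (a + 1)) := by
        rw [integral_const_mul, integral_rpow_mul_exp_neg_mul_Ioi (by linarith) hr]
    _ = a / r := by
        rw [Gamma_add_one ha.ne', rpow_add_one (by positivity), one_div, inv_rpow hr.le]
        have : 0 < Gamma a := Gamma_pos_of_pos ha
        have : 0 < r ^ a := rpow_pos_of_pos hr a
        field_simp

section RandomVariables

variable {Ω ι : Type*} [MeasurableSpace Ω] {P : Measure Ω}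

lemma integrable_of_map_eq_gammaMeasure {X : Ω → ℝ} {a r : ℝ} (ha : 0 < a) (hr : 0 < r)
    (hX : AEMeasurable X P) (hmap : P.map X = gammaMeasure a r) : Integrable X P := by
  have hid : Integrable (fun x => x) (P.map X) := Integrable.of_integral_ne_zero <| by
    rw [hmap, integral_id_gammaMeasure ha hr]
    positivity
  exact (integrable_map_measure aestronglyMeasurable_id hX).mp hid

lemma integral_eq_div_of_map_eq_gammaMeasure {X : Ω → ℝ} {a r : ℝ} (ha : 0 < a) (hr : 0 < r)
    (hX : AEMeasurable X P) (hmap : P.map X = gammaMeasure a r) : ∫ ω, X ω ∂P = a / r := by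
  rw [← integral_map (f := fun x => x) hX aestronglyMeasurable_id, hmap,
    integral_id_gammaMeasure ha hr]

lemma integrable_sum_of_map_eq_expMeasure {s : Finset ι} {T : ι → Ω → ℝ} {r : ι → ℝ}
    (hr : ∀ i ∈ s, 0 < r i)
    (hT : ∀ i ∈ s, AEMeasurable (T i) P) (hmap : ∀ i ∈ s, P.map (T i) = expMeasure (r i)) :
    Integrable (fun ω => ∑ i ∈ s, T i ω) P :=
  integrable_finsetSum _ fun i hi =>
    integrable_of_map_eq_gammaMeasure one_pos (hr i hi) (hT i hi) (hmap i hi)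

lemma integral_sum_of_map_eq_expMeasure {s : Finset ι} {T : ι → Ω → ℝ} {r : ι → ℝ}
    (hr : ∀ i ∈ s, 0 < r i)
    (hT : ∀ i ∈ s, AEMeasurable (T i) P) (hmap : ∀ i ∈ s, P.map (T i) = expMeasure (r i)) :
    ∫ ω, ∑ i ∈ s, T i ω ∂P = ∑ i ∈ s, 1 / r i := by
  rw [integral_finsetSum _ fun i hi =>
    integrable_of_map_eq_gammaMeasure one_pos (hr i hi) (hT i hi) (hmap i hi)]
  exact sum_congr rfl fun i hi =>
    integral_eq_div_of_map_eq_gammaMeasure one_pos (hr i hi) (hT i hi) (hmap i hi)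

end RandomVariables

namespace ProbabilityTheory

variable {Ω ι E : Type*} [MeasurableSpace Ω] [MeasurableSpace ι] [MeasurableSingletonClass ι]
  [MeasurableSpace E] {P : Measure Ω} {κ : Ω → ι} {X : Ω → E}

lemma IndepFun.integral_indicator_preimage_singleton (h : IndepFun κ X P) (hκ : Measurable κ)
    (hX : AEMeasurable X P) {g : E → ℝ} (hg : AEStronglyMeasurable g (P.map X)) (k : ι) :
    ∫ ω, (κ ⁻¹' {k}).indicator (fun ω => g (X ω)) ω ∂P =
      P.real (κ ⁻¹' {k}) * ∫ ω, g (X ω) ∂P := by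
  rw [integral_indicator (hκ (measurableSet_singleton k))]
  exact ((IndepFun_iff_Indep κ X P).mp h).setIntegral_eq_mul hκ.comap_le hX
    (MeasurableSpace.measurableSet_comap.mpr ⟨{k}, measurableSet_singleton k, rfl⟩) hg

lemma IndepFun.integral_comp_eq_sum (h : IndepFun κ X P) (hκ : Measurable κ)
    (hX : AEMeasurable X P) {s : Finset ι} (hκs : ∀ ω, κ ω ∈ s) {g : ι → E → ℝ}
    (hg : ∀ k ∈ s, AEStronglyMeasurable (g k) (P.map X))
    (hgX : ∀ k ∈ s, Integrable (fun ω => g k (X ω)) P) :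
    ∫ ω, g (κ ω) (X ω) ∂P = ∑ k ∈ s, P.real (κ ⁻¹' {k}) * ∫ ω, g k (X ω) ∂P := by
  have hsplit : ∀ ω, g (κ ω) (X ω) = ∑ k ∈ s, (κ ⁻¹' {k}).indicator (fun ω => g k (X ω)) ω := by
    intro ω
    rw [sum_eq_single_of_mem (κ ω) (hκs ω)]
    · exact (Set.indicator_of_mem (s := κ ⁻¹' {κ ω}) rfl (fun ω' => g (κ ω) (X ω'))).symm
    · exact fun k _ hk =>
        Set.indicator_of_notMem (s := κ ⁻¹' {k}) (fun hω : κ ω = k => hk hω.symm) _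
  simp_rw [hsplit]
  rw [integral_finsetSum _ fun k hk => (hgX k hk).indicator (hκ (measurableSet_singleton k))]
  exact sum_congr rfl fun k hk => h.integral_indicator_preimage_singleton hκ hX (hg k hk) k

end ProbabilityTheory

lemma sum_Icc_two_div_add_one_mul_add_two (m : ℕ) :
    ∑ k ∈ Icc 1 m, 2 / (((k : ℝ) + 1) * ((k : ℝ) + 2)) = m / (m + 2) := by
  induction m with
  | zero => simp
  | succ m ih =>
    rw [sum_Icc_succ_top (Nat.le_add_left 1 m), ih]
    push_cast
    field_simp
    ring

lemma sum_Icc_two_div_add_one_mul_add_two_mul_sum_Icc_inv (n : ℕ) :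
    ∑ k ∈ Icc 1 (n - 1), 2 / (((k : ℝ) + 1) * ((k : ℝ) + 2)) * ∑ i ∈ Icc (k + 1) n, (1 : ℝ) / i =
      ∑ i ∈ Icc 1 n, (1 : ℝ) / i - 2 * n / (n + 1) := by
  cases n with
  | zero => simp
  | succ m =>
    rw [Nat.add_sub_cancel]
    induction m with
    | zero => norm_num
    | succ m ih =>
      have hlast : ∀ k ∈ Icc 1 (m + 1), ∑ i ∈ Icc (k + 1) (m + 2), (1 : ℝ) / i =
          ∑ i ∈ Icc (k + 1) (m + 1), (1 : ℝ) / i + 1 / (m + 2) := by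
        intro k hk
        rw [sum_Icc_succ_top (by simp only [mem_Icc] at hk; omega)]
        push_cast
        ring
      rw [sum_congr rfl fun k hk => (congrArg _ (hlast k hk)).trans (mul_add _ _ _),
        sum_add_distrib, ← sum_mul, sum_Icc_two_div_add_one_mul_add_two,
        sum_Icc_succ_top (Nat.le_add_left 1 m), ih,
        Icc_eq_empty_of_lt (Nat.lt_succ_self (m + 1)), sum_empty,
        sum_Icc_succ_top (Nat.le_add_left 1 (m + 1))]
      push_cast
      field_simp
      ring

theorem expectation_coalescent_time_general
    {Ω : Type*} [MeasurableSpace Ω] {P : Measure Ω} [IsProbabilityMeasure P]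
    (n : ℕ)
    (T : ℕ → Ω → ℝ) (κ : Ω → ℕ)
    (hTmeas : ∀ i, Measurable (T i)) (hκmeas : Measurable κ)
    (hTdist : ∀ i ∈ Finset.Icc 1 n, P.map (T i) = expMeasure i)
    (hκrange : ∀ ω, κ ω ∈ Finset.Icc 1 (n - 1))
    (hκdist : ∀ k ∈ Finset.Icc 1 (n - 1),
      P {ω | κ ω = k} =
        ENNReal.ofReal ((2 * ((n : ℝ) + 1) / ((n : ℝ) - 1)) *
          (1 / (((k : ℝ) + 1) * ((k : ℝ) + 2)))))
    (hindep : IndepFun κ (fun ω i => T i ω) P)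
    (H1 : ℝ)
    (hH1 : H1 = ∑ i ∈ Finset.Icc 1 n, (1 : ℝ) / i) :
    ∫ ω, (∑ i ∈ Finset.Icc (κ ω + 1) n, T i ω) ∂P =
      ((n : ℝ) + 1) / ((n : ℝ) - 1) * H1 - 2 * (n : ℝ) / ((n : ℝ) - 1) := by
  have htail_pos : ∀ k, ∀ i ∈ Icc (k + 1) n, (0 : ℝ) < i := fun k i hi => by
    simp only [mem_Icc] at hi
    exact_mod_cast (by omega : 0 < i)
  have htail_dist : ∀ k, ∀ i ∈ Icc (k + 1) n, P.map (T i) = expMeasure i := fun k i hi =>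
    hTdist i (Icc_subset_Icc_left (by omega) hi)
  have hprob : ∀ k ∈ Icc 1 (n - 1), P.real (κ ⁻¹' {k}) =
      ((n : ℝ) + 1) / ((n : ℝ) - 1) * (2 / (((k : ℝ) + 1) * ((k : ℝ) + 2))) := by
    intro k hk
    have hn : (1 : ℝ) < n := by simp only [mem_Icc] at hk; exact_mod_cast (by omega : 1 < n)
    rw [measureReal_def, show κ ⁻¹' {k} = {ω | κ ω = k} from rfl, hκdist k hk,
      ENNReal.toReal_ofReal (by have := sub_pos.mpr hn; positivity)]
    ring
  rw [hindep.integral_comp_eq_sum (g := fun k v => ∑ i ∈ Icc (k + 1) n, v i) hκmeas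
    (measurable_pi_lambda _ hTmeas).aemeasurable hκrange
    (fun k _ => (measurable_sum _ fun i _ => measurable_pi_apply i).aestronglyMeasurable)
    (fun k _ => integrable_sum_of_map_eq_expMeasure (htail_pos k)
      (fun i _ => (hTmeas i).aemeasurable) (htail_dist k))]
  calc ∑ k ∈ Icc 1 (n - 1), P.real (κ ⁻¹' {k}) * ∫ ω, ∑ i ∈ Icc (k + 1) n, T i ω ∂P
      = ((n : ℝ) + 1) / ((n : ℝ) - 1) * ∑ k ∈ Icc 1 (n - 1),
          2 / (((k : ℝ) + 1) * ((k : ℝ) + 2)) * ∑ i ∈ Icc (k + 1) n, (1 : ℝ) / i := by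
        rw [mul_sum]
        refine sum_congr rfl fun k hk => ?_
        rw [hprob k hk, integral_sum_of_map_eq_expMeasure (htail_pos k)
          (fun i _ => (hTmeas i).aemeasurable) (htail_dist k), mul_assoc]
    _ = ((n : ℝ) + 1) / ((n : ℝ) - 1) * (H1 - 2 * n / (n + 1)) := by
        rw [sum_Icc_two_div_add_one_mul_add_two_mul_sum_Icc_inv, hH1]
    _ = ((n : ℝ) + 1) / ((n : ℝ) - 1) * H1 - 2 * (n : ℝ) / ((n : ℝ) - 1) := by
        field_simp

theorem expectation_coalescent_time
    {Ω : Type*} [MeasurableSpace Ω] {P : Measure Ω} [IsProbabilityMeasure P]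
    (n : ℕ) (hn : 2 ≤ n)
    (T : ℕ → Ω → ℝ) (κ : Ω → ℕ)
    (hTmeas : ∀ i, Measurable (T i)) (hκmeas : Measurable κ)
    (hTindep : iIndepFun T P)
    (hTdist : ∀ i ∈ Finset.Icc 1 n, P.map (T i) = expMeasure i)
    (hκrange : ∀ ω, κ ω ∈ Finset.Icc 1 (n - 1))
    (hκdist : ∀ k ∈ Finset.Icc 1 (n - 1),
      P {ω | κ ω = k} =
        ENNReal.ofReal ((2 * ((n : ℝ) + 1) / ((n : ℝ) - 1)) *
          (1 / (((k : ℝ) + 1) * ((k : ℝ) + 2)))))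
    (hindep : IndepFun κ (fun ω i => T i ω) P)
    (H1 H2 : ℝ)
    (hH1 : H1 = ∑ i ∈ Finset.Icc 1 n, (1 : ℝ) / i)
    (hH2 : H2 = ∑ i ∈ Finset.Icc 1 n, (1 : ℝ) / (i : ℝ) ^ 2) :
    ∫ ω, (∑ i ∈ Finset.Icc (κ ω + 1) n, T i ω) ∂P =
      ((n : ℝ) + 1) / ((n : ℝ) - 1) * H1 - 2 * (n : ℝ) / ((n : ℝ) - 1) :=
  expectation_coalescent_time_general n T κ hTmeas hκmeas hTdist hκrange hκdist hindep H1 hH1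
end

section
/- With U^{(n)} = Σ_{i=1}^n T_i and τ^{(n)} = Σ_{i=κ_n+1}^n T_i as above, E[U^{(n)} − τ^{(n)}] = 2(n − H_{n,1})/(n − 1). -/
/-!
Since `κ ≤ n - 1`, the difference `U - τ` is `T 1 + ⋯ + T κ`. As `κ` is independent of the `T i`
and `E[T i] = 1 / i`, conditioning on `κ = k` gives `E[U - τ] = ∑ₖ P(κ = k) H_k`. The weights
`1 / ((k + 1) (k + 2)) = 1 / (k + 1) - 1 / (k + 2)` telescope against the harmonic numbers:
`∑_{k ≤ m} H_k / ((k + 1) (k + 2)) = 1 - (H_{m+1} + 1) / (m + 2)`.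
-/

open MeasureTheory ProbabilityTheory Finset Real

lemma sum_Icc_one_sub_sum_Icc_succ {M : Type*} [AddCommGroup M] (f : ℕ → M) {k n : ℕ}
    (hkn : k ≤ n) :
    ∑ i ∈ Icc 1 n, f i - ∑ i ∈ Icc (k + 1) n, f i = ∑ i ∈ Icc 1 k, f i := by
  have hIcc : ∀ m, Icc 1 m = Ioc 0 m := Icc_add_one_left_eq_Ioc 0
  rw [hIcc, hIcc, Icc_add_one_left_eq_Ioc, sub_eq_iff_eq_add]
  exact (sum_Ioc_consecutive f (Nat.zero_le k) hkn).symm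

lemma sum_one_div_succ_mul_succ_mul_harmonic (m : ℕ) :
    ∑ k ∈ Icc 1 m, 1 / (((k : ℝ) + 1) * ((k : ℝ) + 2)) * harmonic k =
      1 - (harmonic (m + 1) + 1) / (m + 2) := by
  induction m with
  | zero => norm_num
  | succ m ih =>
    rw [sum_Icc_succ_top (by omega), ih, harmonic_succ (m + 1), harmonic_succ m]
    push_cast
    field_simp
    ring

lemma sum_weighted_harmonic_eq {n : ℕ} (hn : 2 ≤ n) :
    ∑ k ∈ Icc 1 (n - 1),
        2 * ((n : ℝ) + 1) / ((n : ℝ) - 1) * (1 / (((k : ℝ) + 1) * ((k : ℝ) + 2))) * harmonic k =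
      2 * (n - harmonic n) / ((n : ℝ) - 1) := by
  obtain ⟨m, rfl⟩ : ∃ m, n = m + 1 := ⟨n - 1, by omega⟩
  have hm : (m : ℝ) ≠ 0 := by exact_mod_cast (show m ≠ 0 by omega)
  simp_rw [Nat.add_sub_cancel, mul_assoc, ← mul_sum, sum_one_div_succ_mul_succ_mul_harmonic]
  push_cast
  rw [add_sub_cancel_right]
  field_simp
  ring

namespace ProbabilityTheory

-- The exponent `a + 1 - 1` is the shape expected by `integral_rpow_mul_exp_neg_mul_Ioi`.
lemma gammaPDFReal_mul_eq_indicator (a r x : ℝ) :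
    gammaPDFReal a r x * x =
      (Set.Ioi 0).indicator (fun x ↦ r ^ a / Gamma a * (x ^ (a + 1 - 1) * exp (-(r * x)))) x := by
  rcases lt_trichotomy x 0 with hx | rfl | hx
  · simp [gammaPDFReal, hx.not_ge, hx.not_gt]
  · simp
  · rw [Set.indicator_of_mem (show x ∈ Set.Ioi 0 from hx), gammaPDFReal, if_pos hx.le,
      add_sub_cancel_right, rpow_sub_one hx.ne']
    field_simp

lemma integral_gammaPDFReal_mul_id {a r : ℝ} (ha : 0 < a) (hr : 0 < r) :
    ∫ x, gammaPDFReal a r x * x = a / r := by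
  simp_rw [gammaPDFReal_mul_eq_indicator]
  rw [integral_indicator measurableSet_Ioi, integral_const_mul,
    integral_rpow_mul_exp_neg_mul_Ioi (by linarith) hr, Gamma_add_one ha.ne',
    div_rpow zero_le_one hr.le, one_rpow, rpow_add_one hr.ne']
  field_simp

lemma integrable_gammaPDFReal_mul_id {a r : ℝ} (ha : 0 < a) (hr : 0 < r) :
    Integrable (fun x ↦ gammaPDFReal a r x * x) := by
  simp_rw [gammaPDFReal_mul_eq_indicator]
  refine (integrable_indicator_iff measurableSet_Ioi).2 (Integrable.const_mul ?_ _)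
  refine .of_integral_ne_zero ?_
  rw [integral_rpow_mul_exp_neg_mul_Ioi (by linarith) hr]
  have := Gamma_pos_of_pos (show 0 < a + 1 by linarith)
  positivity

lemma toReal_gammaPDF {a r : ℝ} (ha : 0 < a) (hr : 0 < r) (x : ℝ) :
    (gammaPDF a r x).toReal = gammaPDFReal a r x :=
  ENNReal.toReal_ofReal (gammaPDFReal_nonneg ha hr x)

lemma measurable_gammaPDF (a r : ℝ) : Measurable (gammaPDF a r) :=
  (measurable_gammaPDFReal a r).ennreal_ofReal

lemma integrable_id_gammaMeasure {a r : ℝ} (ha : 0 < a) (hr : 0 < r) :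
    Integrable (fun x ↦ x) (gammaMeasure a r) := by
  rw [gammaMeasure, integrable_withDensity_iff_integrable_smul' (measurable_gammaPDF a r)
    (ae_of_all _ fun _ ↦ ENNReal.ofReal_lt_top)]
  simpa only [toReal_gammaPDF ha hr, smul_eq_mul] using integrable_gammaPDFReal_mul_id ha hr

lemma integral_id_gammaMeasure {a r : ℝ} (ha : 0 < a) (hr : 0 < r) :
    ∫ x, x ∂gammaMeasure a r = a / r := by
  rw [gammaMeasure, integral_withDensity_eq_integral_toReal_smul (measurable_gammaPDF a r)
    (ae_of_all _ fun _ ↦ ENNReal.ofReal_lt_top)]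
  simpa only [toReal_gammaPDF ha hr, smul_eq_mul] using integral_gammaPDFReal_mul_id ha hr

variable {Ω : Type*} [MeasurableSpace Ω] {P : Measure Ω} {X : Ω → ℝ} {r : ℝ}

lemma aemeasurable_of_map_eq_expMeasure (hr : 0 < r) (hX : P.map X = expMeasure r) :
    AEMeasurable X P :=
  have := isProbabilityMeasure_expMeasure hr
  .of_map_ne_zero (hX ▸ IsProbabilityMeasure.ne_zero _)

lemma integrable_of_map_eq_expMeasure (hr : 0 < r) (hX : P.map X = expMeasure r) :
    Integrable X P := by
  have hXm := aemeasurable_of_map_eq_expMeasure hr hX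
  exact (integrable_map_measure (g := fun x ↦ x) aestronglyMeasurable_id hXm).1
    (hX ▸ integrable_id_gammaMeasure one_pos hr)

lemma integral_of_map_eq_expMeasure (hr : 0 < r) (hX : P.map X = expMeasure r) :
    ∫ ω, X ω ∂P = r⁻¹ := by
  rw [← integral_map (f := fun x ↦ x) (aemeasurable_of_map_eq_expMeasure hr hX)
    aestronglyMeasurable_id, hX, expMeasure, integral_id_gammaMeasure one_pos hr, one_div]

lemma integrable_sum_Icc_of_map_eq_expMeasure {T : ℕ → Ω → ℝ} {k : ℕ}
    (hT : ∀ i ∈ Icc 1 k, P.map (T i) = expMeasure i) :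
    Integrable (fun ω ↦ ∑ i ∈ Icc 1 k, T i ω) P :=
  integrable_finsetSum _ fun i hi ↦
    integrable_of_map_eq_expMeasure (Nat.cast_pos.2 (mem_Icc.1 hi).1) (hT i hi)

lemma integral_sum_Icc_eq_harmonic {T : ℕ → Ω → ℝ} {k : ℕ}
    (hT : ∀ i ∈ Icc 1 k, P.map (T i) = expMeasure i) :
    ∫ ω, ∑ i ∈ Icc 1 k, T i ω ∂P = harmonic k := by
  rw [integral_finsetSum _ fun i hi ↦
      integrable_of_map_eq_expMeasure (Nat.cast_pos.2 (mem_Icc.1 hi).1) (hT i hi),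
    harmonic_eq_sum_Icc]
  push_cast
  exact sum_congr rfl fun i hi ↦
    integral_of_map_eq_expMeasure (Nat.cast_pos.2 (mem_Icc.1 hi).1) (hT i hi)

lemma integral_randomIndex_eq_sum {ι : Type*} [MeasurableSpace ι] [MeasurableSingletonClass ι]
    {κ : Ω → ι} {Y : ι → Ω → ℝ} {s : Finset ι}
    (hκ : Measurable κ) (hκs : ∀ ω, κ ω ∈ s) (hY : ∀ k ∈ s, Integrable (Y k) P)
    (hind : ∀ k ∈ s, IndepFun κ (Y k) P) :
    ∫ ω, Y (κ ω) ω ∂P = ∑ k ∈ s, P.real {ω | κ ω = k} * ∫ ω, Y k ω ∂P := by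
  have hlev : ∀ k, MeasurableSet {ω | κ ω = k} := fun k ↦ hκ (measurableSet_singleton k)
  have hsplit : ∀ ω, Y (κ ω) ω = ∑ k ∈ s, {ω | κ ω = k}.indicator (Y k) ω := fun ω ↦ by
    classical simp [Set.indicator_apply, hκs ω]
  simp_rw [hsplit]
  rw [integral_finsetSum _ fun k hk ↦ (hY k hk).indicator (hlev k)]
  refine sum_congr rfl fun k hk ↦ ?_
  rw [integral_indicator (hlev k)]
  exact Indep.setIntegral_eq_mul (f := fun x ↦ x) hκ.comap_le (hind k hk) (hY k hk).aemeasurable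
    ⟨{k}, measurableSet_singleton k, rfl⟩ aestronglyMeasurable_id

end ProbabilityTheory

theorem expectation_shared_path_general
    {Ω : Type*} [MeasurableSpace Ω] {P : Measure Ω}
    (n : ℕ) (hn : 2 ≤ n)
    (T : ℕ → Ω → ℝ) (κ : Ω → ℕ)
    (hκmeas : Measurable κ)
    (hTdist : ∀ i ∈ Finset.Icc 1 n, P.map (T i) = expMeasure i)
    (hκrange : ∀ ω, κ ω ∈ Finset.Icc 1 (n - 1))
    (hκdist : ∀ k ∈ Finset.Icc 1 (n - 1),
      P {ω | κ ω = k} =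
        ENNReal.ofReal ((2 * ((n : ℝ) + 1) / ((n : ℝ) - 1)) *
          (1 / (((k : ℝ) + 1) * ((k : ℝ) + 2)))))
    (hindep : IndepFun κ (fun ω i => T i ω) P)
    (H1 : ℝ)
    (hH1 : H1 = ∑ i ∈ Finset.Icc 1 n, (1 : ℝ) / i) :
    ∫ ω, ((∑ i ∈ Finset.Icc 1 n, T i ω) - ∑ i ∈ Finset.Icc (κ ω + 1) n, T i ω) ∂P =
      2 * ((n : ℝ) - H1) / ((n : ℝ) - 1) := by
  have hTk : ∀ k ∈ Icc 1 (n - 1), ∀ i ∈ Icc 1 k, P.map (T i) = expMeasure i := fun k hk i hi ↦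
    hTdist i (Icc_subset_Icc_right ((mem_Icc.1 hk).2.trans (Nat.sub_le n 1)) hi)
  have hdiff : ∀ ω, (∑ i ∈ Icc 1 n, T i ω) - ∑ i ∈ Icc (κ ω + 1) n, T i ω =
      ∑ i ∈ Icc 1 (κ ω), T i ω := fun ω ↦
    sum_Icc_one_sub_sum_Icc_succ _ ((mem_Icc.1 (hκrange ω)).2.trans (Nat.sub_le n 1))
  have hind : ∀ k ∈ Icc 1 (n - 1), IndepFun κ (fun ω ↦ ∑ i ∈ Icc 1 k, T i ω) P :=
    fun k _ ↦ hindep.comp measurable_id (Finset.measurable_sum _ fun i _ ↦ measurable_pi_apply i)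
  have hn1 : (0 : ℝ) < n - 1 := sub_pos.2 (by exact_mod_cast hn)
  have hprob : ∀ k ∈ Icc 1 (n - 1), P.real {ω | κ ω = k} =
      2 * ((n : ℝ) + 1) / ((n : ℝ) - 1) * (1 / (((k : ℝ) + 1) * ((k : ℝ) + 2))) := fun k hk ↦ by
    rw [measureReal_def, hκdist k hk, ENNReal.toReal_ofReal (by positivity)]
  have hHn : H1 = harmonic n := by
    rw [hH1, harmonic_eq_sum_Icc]
    push_cast
    simp_rw [one_div]
  simp_rw [hdiff]
  rw [integral_randomIndex_eq_sum hκmeas hκrange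
      (fun k hk ↦ integrable_sum_Icc_of_map_eq_expMeasure (hTk k hk)) hind,
    hHn, ← sum_weighted_harmonic_eq hn]
  refine sum_congr rfl fun k hk ↦ ?_
  rw [hprob k hk, integral_sum_Icc_eq_harmonic (hTk k hk)]

theorem expectation_shared_path
    {Ω : Type*} [MeasurableSpace Ω] {P : Measure Ω} [IsProbabilityMeasure P]
    (n : ℕ) (hn : 2 ≤ n)
    (T : ℕ → Ω → ℝ) (κ : Ω → ℕ)
    (hTmeas : ∀ i, Measurable (T i)) (hκmeas : Measurable κ)
    (hTindep : iIndepFun T P)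
    (hTdist : ∀ i ∈ Finset.Icc 1 n, P.map (T i) = expMeasure i)
    (hκrange : ∀ ω, κ ω ∈ Finset.Icc 1 (n - 1))
    (hκdist : ∀ k ∈ Finset.Icc 1 (n - 1),
      P {ω | κ ω = k} =
        ENNReal.ofReal ((2 * ((n : ℝ) + 1) / ((n : ℝ) - 1)) *
          (1 / (((k : ℝ) + 1) * ((k : ℝ) + 2)))))
    (hindep : IndepFun κ (fun ω i => T i ω) P)
    (H1 H2 : ℝ)
    (hH1 : H1 = ∑ i ∈ Finset.Icc 1 n, (1 : ℝ) / i)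
    (hH2 : H2 = ∑ i ∈ Finset.Icc 1 n, (1 : ℝ) / (i : ℝ) ^ 2) :
    ∫ ω, ((∑ i ∈ Finset.Icc 1 n, T i ω) - ∑ i ∈ Finset.Icc (κ ω + 1) n, T i ω) ∂P =
      2 * ((n : ℝ) - H1) / ((n : ℝ) - 1) :=
  expectation_shared_path_general n hn T κ hκmeas hTdist hκrange hκdist hindep H1 hH1
end

section
/- With the Yule model setup, E[(τ^{(n)})^2] = ((n+1)/(n-1))·((H_{n,1} − 2)^2 + H_{n,2}) − 4/(n-1). -/
/-!
Conditioning on the independent cut point `κ = k` reduces the second moment to the sum over `k`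
of `P(κ = k) · E[(T_{k+1} + ⋯ + T_n)²]`. Each block is a sum of independent exponentials, so its
second moment is `(∑ 1/i)² + ∑ 1/i²` (squared mean plus variance). Since
`1/((k+1)(k+2)) = 1/(k+1) - 1/(k+2)`, the resulting weighted sum of tail harmonic sums telescopes.
-/

open MeasureTheory ProbabilityTheory Finset Real

lemma expMeasure_eq_withDensity_restrict (r : ℝ) :
    expMeasure r =
      (volume.restrict (Set.Ici 0)).withDensity fun x => ENNReal.ofReal (r * exp (-(r * x))) := by
  rw [← withDensity_indicator measurableSet_Ici]
  refine congrArg volume.withDensity (funext fun x => ?_)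
  rw [Set.indicator_apply]
  split_ifs with hx
  · exact exponentialPDF_of_nonneg hx
  · exact exponentialPDF_of_neg (not_le.mp hx)

lemma integrableOn_pow_mul_exp_neg_mul_Ici {r : ℝ} (hr : 0 < r) (p : ℕ) :
    IntegrableOn (fun x : ℝ => x ^ p * exp (-(r * x))) (Set.Ici 0) := by
  rw [integrableOn_Ici_iff_integrableOn_Ioi]
  simpa [Real.rpow_natCast] using
    integrableOn_rpow_mul_exp_neg_mul_rpow (p := 1) (s := p) (b := r)
      (by linarith [(Nat.cast_nonneg p : (0 : ℝ) ≤ p)]) one_pos hr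

lemma integral_pow_mul_exp_neg_mul_Ici {r : ℝ} (hr : 0 < r) (p : ℕ) :
    ∫ x in Set.Ici 0, x ^ p * exp (-(r * x)) = p.factorial / r ^ (p + 1) := by
  have hGamma := integral_rpow_mul_exp_neg_mul_Ioi (a := p + 1) (by positivity) hr
  simp only [add_sub_cancel_right, Real.rpow_natCast, Real.Gamma_nat_eq_factorial] at hGamma
  rw [integral_Ici_eq_integral_Ioi, hGamma, ← Nat.cast_add_one, Real.rpow_natCast, one_div, inv_pow]
  ring

lemma integrable_pow_expMeasure {r : ℝ} (hr : 0 < r) (p : ℕ) :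
    Integrable (fun x => x ^ p) (expMeasure r) := by
  rw [expMeasure_eq_withDensity_restrict, integrable_withDensity_iff_integrable_smul'
    (by fun_prop) (.of_forall fun _ => ENNReal.ofReal_lt_top)]
  simp (disch := positivity) only [ENNReal.toReal_ofReal, smul_eq_mul]
  refine ((integrableOn_pow_mul_exp_neg_mul_Ici hr p).const_mul r).congr (.of_forall fun x => ?_)
  ring

lemma integral_pow_expMeasure {r : ℝ} (hr : 0 < r) (p : ℕ) :
    ∫ x, x ^ p ∂expMeasure r = p.factorial / r ^ p := by
  rw [expMeasure_eq_withDensity_restrict, integral_withDensity_eq_integral_toReal_smul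
    (by fun_prop) (.of_forall fun _ => ENNReal.ofReal_lt_top)]
  simp (disch := positivity) only [ENNReal.toReal_ofReal, smul_eq_mul]
  simp_rw [mul_right_comm _ _ (_ ^ p), mul_assoc r, integral_const_mul,
    integral_pow_mul_exp_neg_mul_Ici hr, pow_succ]
  field_simp

lemma memLp_id_expMeasure {r : ℝ} (hr : 0 < r) : MemLp id 2 (expMeasure r) :=
  (memLp_two_iff_integrable_sq aestronglyMeasurable_id).2 (integrable_pow_expMeasure hr 2)

lemma integral_id_expMeasure {r : ℝ} (hr : 0 < r) : ∫ x, x ∂expMeasure r = r⁻¹ := by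
  simpa using integral_pow_expMeasure hr 1

lemma variance_id_expMeasure {r : ℝ} (hr : 0 < r) : Var[id; expMeasure r] = (r ^ 2)⁻¹ := by
  have := isProbabilityMeasure_expMeasure hr
  rw [variance_eq_sub (memLp_id_expMeasure hr)]
  simp only [Pi.pow_apply, id_eq, integral_pow_expMeasure hr 2, integral_id_expMeasure hr]
  norm_num
  ring

section

variable {Ω : Type*} [MeasurableSpace Ω] {P : Measure Ω}

namespace ProbabilityTheory.HasLaw

variable {X : Ω → ℝ} {r : ℝ}

lemma memLp_two_of_expMeasure (hX : HasLaw X (expMeasure r) P) (hr : 0 < r) : MemLp X 2 P := by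
  have h := memLp_id_expMeasure hr
  rw [← hX.map_eq] at h
  exact h.comp_of_map hX.aemeasurable

lemma integral_eq_inv_of_expMeasure (hX : HasLaw X (expMeasure r) P) (hr : 0 < r) :
    ∫ ω, X ω ∂P = r⁻¹ := by
  rw [hX.integral_eq, integral_id_expMeasure hr]

lemma variance_eq_inv_sq_of_expMeasure (hX : HasLaw X (expMeasure r) P) (hr : 0 < r) :
    Var[X; P] = (r ^ 2)⁻¹ := by
  rw [hX.variance_eq, variance_id_expMeasure hr]

end ProbabilityTheory.HasLaw

lemma integral_sq_sum_eq_sq_sum_integral_add_sum_variance [IsProbabilityMeasure P] {ι : Type*}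
    {X : ι → Ω → ℝ} {s : Finset ι} (hX : ∀ i ∈ s, MemLp (X i) 2 P)
    (hind : Set.Pairwise ↑s fun i j => X i ⟂ᵢ[P] X j) :
    ∫ ω, (∑ i ∈ s, X i ω) ^ 2 ∂P = (∑ i ∈ s, ∫ ω, X i ω ∂P) ^ 2 + ∑ i ∈ s, Var[X i; P] := by
  rw [← IndepFun.variance_sum hX hind, variance_eq_sub (memLp_finsetSum' s hX)]
  simp only [Finset.sum_apply, Pi.pow_apply]
  rw [integral_finsetSum s fun i hi => (hX i hi).integrable one_le_two]
  ring

lemma integral_sq_sum_of_hasLaw_expMeasure [IsProbabilityMeasure P] {ι : Type*}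
    {X : ι → Ω → ℝ} {r : ι → ℝ} {s : Finset ι} (hX : ∀ i ∈ s, HasLaw (X i) (expMeasure (r i)) P)
    (hr : ∀ i ∈ s, 0 < r i) (hind : Set.Pairwise ↑s fun i j => X i ⟂ᵢ[P] X j) :
    ∫ ω, (∑ i ∈ s, X i ω) ^ 2 ∂P = (∑ i ∈ s, (r i)⁻¹) ^ 2 + ∑ i ∈ s, (r i ^ 2)⁻¹ := by
  rw [integral_sq_sum_eq_sq_sum_integral_add_sum_variance
      (fun i hi => (hX i hi).memLp_two_of_expMeasure (hr i hi)) hind,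
    sum_congr rfl fun i hi => (hX i hi).integral_eq_inv_of_expMeasure (hr i hi),
    sum_congr rfl fun i hi => (hX i hi).variance_eq_inv_sq_of_expMeasure (hr i hi)]

lemma integral_comp_eq_sum_measureReal_mul_of_indepFun {α β : Type*} [MeasurableSpace α]
    [MeasurableSingletonClass α] [MeasurableSpace β] [IsFiniteMeasure P]
    {κ : Ω → α} {Y : Ω → β} {s : Finset α} {g : α → β → ℝ}
    (hκ : Measurable κ) (hind : κ ⟂ᵢ[P] Y) (hs : ∀ ω, κ ω ∈ s)
    (hg : ∀ k ∈ s, Measurable (g k)) (hgY : ∀ k ∈ s, Integrable (fun ω => g k (Y ω)) P) :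
    ∫ ω, g (κ ω) (Y ω) ∂P = ∑ k ∈ s, P.real {ω | κ ω = k} * ∫ ω, g k (Y ω) ∂P := by
  classical
  have hmeas : ∀ k, MeasurableSet {ω | κ ω = k} := fun k => hκ (measurableSet_singleton k)
  have hsplit : ∀ ω, g (κ ω) (Y ω) = ∑ k ∈ s, {ω | κ ω = k}.indicator 1 ω * g k (Y ω) :=
    fun ω => by simp [Set.indicator_apply, hs ω]
  have hind_k : ∀ k ∈ s, {ω | κ ω = k}.indicator (1 : Ω → ℝ) ⟂ᵢ[P] fun ω => g k (Y ω) :=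
    fun k hk => hind.comp
      (measurable_one.indicator (measurableSet_singleton k) :
        Measurable (({k} : Set α).indicator (1 : α → ℝ))) (hg k hk)
  have hint_k : ∀ k ∈ s, Integrable ({ω | κ ω = k}.indicator (1 : Ω → ℝ)) P := fun k _ =>
    (integrable_const 1).indicator (hmeas k)
  simp_rw [hsplit]
  rw [integral_finsetSum s fun k hk => by
    exact (hind_k k hk).integrable_mul (hint_k k hk) (hgY k hk)]
  refine sum_congr rfl fun k hk => ?_
  rw [(hind_k k hk).integral_fun_mul_eq_mul_integral (hint_k k hk).aestronglyMeasurable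
    (hgY k hk).aestronglyMeasurable, integral_indicator_one (hmeas k)]

end

lemma sum_weighted_tail_harmonic_sq_add (n : ℕ) :
    ∑ k ∈ Icc 1 (n - 1), 1 / (((k : ℝ) + 1) * ((k : ℝ) + 2)) *
        ((∑ i ∈ Icc (k + 1) n, (1 : ℝ) / i) ^ 2 + ∑ i ∈ Icc (k + 1) n, (1 : ℝ) / (i : ℝ) ^ 2) =
      ((∑ i ∈ Icc 1 n, (1 : ℝ) / i - 2) ^ 2 + ∑ i ∈ Icc 1 n, (1 : ℝ) / (i : ℝ) ^ 2) / 2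
        - 2 / ((n : ℝ) + 1) := by
  rcases Nat.eq_zero_or_pos n with rfl | hn
  · norm_num
  -- The coefficients of `Φ` are found by matching `Φ k - Φ (k + 1)` with the `k`-th summand.
  set Φ : ℕ → ℝ := fun k =>
    ((∑ i ∈ Icc k n, (1 : ℝ) / i) ^ 2 + ∑ i ∈ Icc k n, (1 : ℝ) / (i : ℝ) ^ 2) / (k + 1)
      - 2 * (∑ i ∈ Icc k n, (1 : ℝ) / i) / k + 2 / k with hΦ
  have hstep : ∀ k ∈ Ico 1 n, 1 / (((k : ℝ) + 1) * ((k : ℝ) + 2)) *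
      ((∑ i ∈ Icc (k + 1) n, (1 : ℝ) / i) ^ 2 + ∑ i ∈ Icc (k + 1) n, (1 : ℝ) / (i : ℝ) ^ 2) =
      -(Φ (k + 1) - Φ k) := by
    intro k hk
    obtain ⟨hk1, hkn⟩ := mem_Ico.mp hk
    have hk0 : (k : ℝ) ≠ 0 := by positivity
    have hsplit : ∀ f : ℕ → ℝ, ∑ i ∈ Icc k n, f i = f k + ∑ i ∈ Icc (k + 1) n, f i := fun f => by
      rw [← insert_Icc_add_one_left_eq_Icc hkn.le, sum_insert (by simp)]
    simp only [hΦ, hsplit]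
    push_cast
    field_simp
    ring
  have hIcc : Icc 1 (n - 1) = Ico 1 n := by ext; simp; omega
  have hn0 : (n : ℝ) ≠ 0 := by positivity
  rw [hIcc, sum_congr rfl hstep, sum_neg_distrib, sum_Ico_sub Φ hn]
  simp only [hΦ, Icc_self, sum_singleton]
  push_cast
  field_simp
  ring

theorem second_moment_coalescent_time_general
    {Ω : Type*} [MeasurableSpace Ω] {P : Measure Ω} [IsProbabilityMeasure P]
    (n : ℕ)
    (T : ℕ → Ω → ℝ) (κ : Ω → ℕ)
    (hTmeas : ∀ i, Measurable (T i)) (hκmeas : Measurable κ)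
    (hTindep : iIndepFun T P)
    (hTdist : ∀ i ∈ Finset.Icc 1 n, P.map (T i) = expMeasure i)
    (hκrange : ∀ ω, κ ω ∈ Finset.Icc 1 (n - 1))
    (hκdist : ∀ k ∈ Finset.Icc 1 (n - 1),
      P {ω | κ ω = k} =
        ENNReal.ofReal ((2 * ((n : ℝ) + 1) / ((n : ℝ) - 1)) *
          (1 / (((k : ℝ) + 1) * ((k : ℝ) + 2)))))
    (hindep : IndepFun κ (fun ω i => T i ω) P)
    (H1 H2 : ℝ)
    (hH1 : H1 = ∑ i ∈ Finset.Icc 1 n, (1 : ℝ) / i)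
    (hH2 : H2 = ∑ i ∈ Finset.Icc 1 n, (1 : ℝ) / (i : ℝ) ^ 2) :
    ∫ ω, (∑ i ∈ Finset.Icc (κ ω + 1) n, T i ω) ^ 2 ∂P =
      ((n : ℝ) + 1) / ((n : ℝ) - 1) * ((H1 - 2) ^ 2 + H2) - 4 / ((n : ℝ) - 1) := by
  have hlaw : ∀ k, ∀ i ∈ Icc (k + 1) n, HasLaw (T i) (expMeasure i) P := fun k i hi =>
    ⟨(hTmeas i).aemeasurable, hTdist i (Icc_subset_Icc (by omega) le_rfl hi)⟩
  have hrate : ∀ k, ∀ i ∈ Icc (k + 1) n, (0 : ℝ) < i := fun k i hi =>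
    Nat.cast_pos.mpr (by have := (mem_Icc.mp hi).1; omega)
  calc ∫ ω, (∑ i ∈ Icc (κ ω + 1) n, T i ω) ^ 2 ∂P
      = ∑ k ∈ Icc 1 (n - 1),
          P.real {ω | κ ω = k} * ∫ ω, (∑ i ∈ Icc (k + 1) n, T i ω) ^ 2 ∂P :=
        integral_comp_eq_sum_measureReal_mul_of_indepFun
          (g := fun k v => (∑ i ∈ Icc (k + 1) n, v i) ^ 2) hκmeas hindep hκrange
          (fun k _ => by fun_prop) fun k _ => (memLp_finsetSum _ fun i hi =>
            (hlaw k i hi).memLp_two_of_expMeasure (hrate k i hi)).integrable_sq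
    _ = ∑ k ∈ Icc 1 (n - 1), 2 * ((n : ℝ) + 1) / ((n : ℝ) - 1) *
          (1 / (((k : ℝ) + 1) * ((k : ℝ) + 2)) *
            ((∑ i ∈ Icc (k + 1) n, (1 : ℝ) / i) ^ 2
              + ∑ i ∈ Icc (k + 1) n, (1 : ℝ) / (i : ℝ) ^ 2)) := by
        refine sum_congr rfl fun k hk => ?_
        have hn : (1 : ℝ) ≤ n := by
          have := mem_Icc.mp hk
          exact_mod_cast (by omega : 1 ≤ n)
        rw [measureReal_def, hκdist k hk, ENNReal.toReal_ofReal (by bound),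
          integral_sq_sum_of_hasLaw_expMeasure (hlaw k) (hrate k)
            fun i _ j _ hij => hTindep.indepFun hij, mul_assoc]
        simp only [one_div]
    _ = _ := by
        rw [← mul_sum, sum_weighted_tail_harmonic_sq_add, hH1, hH2]
        field_simp
        ring

theorem second_moment_coalescent_time
    {Ω : Type*} [MeasurableSpace Ω] {P : Measure Ω} [IsProbabilityMeasure P]
    (n : ℕ) (hn : 2 ≤ n)
    (T : ℕ → Ω → ℝ) (κ : Ω → ℕ)
    (hTmeas : ∀ i, Measurable (T i)) (hκmeas : Measurable κ)
    (hTindep : iIndepFun T P)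
    (hTdist : ∀ i ∈ Finset.Icc 1 n, P.map (T i) = expMeasure i)
    (hκrange : ∀ ω, κ ω ∈ Finset.Icc 1 (n - 1))
    (hκdist : ∀ k ∈ Finset.Icc 1 (n - 1),
      P {ω | κ ω = k} =
        ENNReal.ofReal ((2 * ((n : ℝ) + 1) / ((n : ℝ) - 1)) *
          (1 / (((k : ℝ) + 1) * ((k : ℝ) + 2)))))
    (hindep : IndepFun κ (fun ω i => T i ω) P)
    (H1 H2 : ℝ)
    (hH1 : H1 = ∑ i ∈ Finset.Icc 1 n, (1 : ℝ) / i)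
    (hH2 : H2 = ∑ i ∈ Finset.Icc 1 n, (1 : ℝ) / (i : ℝ) ^ 2) :
    ∫ ω, (∑ i ∈ Finset.Icc (κ ω + 1) n, T i ω) ^ 2 ∂P =
      ((n : ℝ) + 1) / ((n : ℝ) - 1) * ((H1 - 2) ^ 2 + H2) - 4 / ((n : ℝ) - 1) :=
  second_moment_coalescent_time_general n T κ hTmeas hκmeas hTindep hTdist hκrange hκdist hindep H1
    H2 hH1 hH2
end

section
/- With the Yule model setup, the cross-moment satisfies E[U^{(n)} τ^{(n)}] = ((n+1)/(n-1))(H_{n,1}^2 − H_{n,2}) − (2n/(n-1))(H_{n,1} − 1). -/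
open MeasureTheory ProbabilityTheory Finset Real

/-!
Since `κ` is independent of the `T i` and takes values in `[1, n - 1]`, conditioning on `κ`
gives `E[U τ] = ∑ₖ P(κ = k) E[U τₖ]` with `τₖ = ∑_{j > k} T j`. The `T i` are independent with
mean `1/i` and variance `1/i²`, so `E[U τₖ] = H_{n,1} ∑_{j > k} 1/j + ∑_{j > k} 1/j²`.
Exchanging the two sums, the weights telescope, `∑_{k < j} 1/((k+1)(k+2)) = 1/2 - 1/(j+1)`,
and the remaining sums over `j` are evaluated by partial fractions.
-/

namespace ProbabilityTheory

open scoped Nat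

section ExponentialMoments

variable {r : ℝ}

lemma exponentialPDFReal_mul_pow (r : ℝ) (p : ℕ) :
    (fun x => exponentialPDFReal r x * x ^ p) =
      (Set.Ici 0).indicator (fun x => r * exp (-(r * x)) * x ^ p) := by
  ext x
  by_cases hx : 0 ≤ x <;>
    simp [exponentialPDFReal, gammaPDFReal, hx, Set.indicator_of_notMem]

lemma expMeasure_eq_withDensity (r : ℝ) :
    expMeasure r = volume.withDensity (fun x => ENNReal.ofReal (exponentialPDFReal r x)) := rfl

lemma integrable_pow_expMeasure (hr : 0 < r) (p : ℕ) :
    Integrable (fun x => x ^ p) (expMeasure r) := by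
  rw [expMeasure_eq_withDensity,
    integrable_withDensity_iff_integrable_smul' (by fun_prop) (by simp)]
  simp only [ENNReal.toReal_ofReal (exponentialPDFReal_nonneg hr _), smul_eq_mul,
    exponentialPDFReal_mul_pow, integrable_indicator_iff measurableSet_Ici]
  rw [integrableOn_Ici_iff_integrableOn_Ioi]
  have h := integrableOn_rpow_mul_exp_neg_mul_rpow (s := p) (by linarith [p.cast_nonneg (α := ℝ)])
    one_pos hr
  refine IntegrableOn.congr_fun (h.const_mul r) (fun x _ => ?_) measurableSet_Ioi
  simp only [rpow_one, rpow_natCast, neg_mul]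
  ring

lemma integral_pow_expMeasure (hr : 0 < r) (p : ℕ) :
    ∫ x, x ^ p ∂expMeasure r = p ! / r ^ p := by
  rw [expMeasure_eq_withDensity, integral_withDensity_eq_integral_toReal_smul (by fun_prop)
    (by simp)]
  simp only [ENNReal.toReal_ofReal (exponentialPDFReal_nonneg hr _), smul_eq_mul]
  rw [exponentialPDFReal_mul_pow, integral_indicator measurableSet_Ici,
    integral_Ici_eq_integral_Ioi]
  have h := integral_rpow_mul_exp_neg_mul_Ioi (a := p + 1) (by positivity) hr
  rw [add_sub_cancel_right, Gamma_nat_eq_factorial] at h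
  calc ∫ x in Set.Ioi 0, r * exp (-(r * x)) * x ^ p
      = r * ∫ x in Set.Ioi 0, x ^ (p : ℝ) * exp (-(r * x)) := by
        rw [← integral_const_mul]
        refine setIntegral_congr_fun measurableSet_Ioi (fun x _ => ?_)
        simp only [rpow_natCast]
        ring
    _ = p ! / r ^ p := by
        rw [h, ← Nat.cast_add_one, rpow_natCast, one_div, inv_pow, pow_succ]
        field_simp

lemma memLp_id_expMeasure (hr : 0 < r) : MemLp id 2 (expMeasure r) :=
  (memLp_two_iff_integrable_sq aestronglyMeasurable_id).mpr (integrable_pow_expMeasure hr 2)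

lemma integral_id_expMeasure (hr : 0 < r) : ∫ x, x ∂expMeasure r = r⁻¹ := by
  simpa using integral_pow_expMeasure hr 1

lemma variance_id_expMeasure (hr : 0 < r) : Var[id; expMeasure r] = (r ^ 2)⁻¹ := by
  have := isProbabilityMeasure_expMeasure hr
  rw [variance_eq_sub (memLp_id_expMeasure hr)]
  simp only [Pi.pow_apply, id_eq, integral_pow_expMeasure hr 2, integral_id_expMeasure hr]
  field_simp
  norm_num [Nat.factorial]

end ExponentialMoments

variable {Ω : Type*} [MeasurableSpace Ω] {P : Measure Ω}

lemma HasLaw.memLp_iff {X : Ω → ℝ} {μ : Measure ℝ} (hX : HasLaw X μ P) {p : ENNReal} :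
    MemLp X p P ↔ MemLp id p μ := by
  rw [← hX.map_eq, memLp_map_measure_iff aestronglyMeasurable_id hX.aemeasurable, Function.id_comp]

lemma HasLaw.memLp_two_of_expMeasure_s8 {X : Ω → ℝ} {r : ℝ} (hX : HasLaw X (expMeasure r) P)
    (hr : 0 < r) : MemLp X 2 P :=
  hX.memLp_iff.mpr (memLp_id_expMeasure hr)

lemma integral_sum_mul_sum_of_pairwise_indepFun [IsProbabilityMeasure P] {ι : Type*}
    [DecidableEq ι] {X : ι → Ω → ℝ} {s t : Finset ι}
    (hXs : ∀ i ∈ s, MemLp (X i) 2 P) (hXt : ∀ j ∈ t, MemLp (X j) 2 P)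
    (hindep : Pairwise fun i j => X i ⟂ᵢ[P] X j) :
    ∫ ω, (∑ i ∈ s, X i ω) * (∑ j ∈ t, X j ω) ∂P =
      (∑ i ∈ s, P[X i]) * (∑ j ∈ t, P[X j]) + ∑ i ∈ s ∩ t, Var[X i; P] := by
  have hcov : ∀ i ∈ s, ∀ j ∈ t, cov[X i, X j; P] = if i = j then Var[X i; P] else 0 := by
    intro i hi j _
    split_ifs with hij
    · rw [hij, covariance_self (hXt j ‹_›).aemeasurable]
    · exact (hindep hij).covariance_eq_zero (hXs i hi) (hXt j ‹_›)
  have h := covariance_eq_sub (memLp_finsetSum' s hXs) (memLp_finsetSum' t hXt)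
  rw [covariance_sum_sum' hXs hXt, sum_congr rfl fun i hi => sum_congr rfl (hcov i hi)] at h
  simp only [sum_ite_eq, ← sum_filter, filter_mem_eq_inter, Pi.mul_apply, Finset.sum_apply] at h
  rw [integral_finsetSum s fun i hi => (hXs i hi).integrable one_le_two,
    integral_finsetSum t fun j hj => (hXt j hj).integrable one_le_two] at h
  linarith

lemma integral_sum_mul_sum_of_hasLaw_expMeasure [IsProbabilityMeasure P] {ι : Type*}
    [DecidableEq ι] {X : ι → Ω → ℝ} {r : ι → ℝ} {s t : Finset ι} (hr : ∀ i ∈ s ∪ t, 0 < r i)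
    (hlaw : ∀ i ∈ s ∪ t, HasLaw (X i) (expMeasure (r i)) P)
    (hindep : Pairwise fun i j => X i ⟂ᵢ[P] X j) :
    ∫ ω, (∑ i ∈ s, X i ω) * (∑ j ∈ t, X j ω) ∂P =
      (∑ i ∈ s, (r i)⁻¹) * (∑ j ∈ t, (r j)⁻¹) + ∑ i ∈ s ∩ t, (r i ^ 2)⁻¹ := by
  have hL2 : ∀ i ∈ s ∪ t, MemLp (X i) 2 P :=
    fun i hi => (hlaw i hi).memLp_two_of_expMeasure_s8 (hr i hi)
  have hmean : ∀ i ∈ s ∪ t, P[X i] = (r i)⁻¹ :=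
    fun i hi => (hlaw i hi).integral_eq.trans (integral_id_expMeasure (hr i hi))
  have hvar : ∀ i ∈ s ∪ t, Var[X i; P] = (r i ^ 2)⁻¹ :=
    fun i hi => (hlaw i hi).variance_eq.trans (variance_id_expMeasure (hr i hi))
  have hs : s ⊆ s ∪ t := subset_union_left
  have ht : t ⊆ s ∪ t := subset_union_right
  rw [integral_sum_mul_sum_of_pairwise_indepFun (fun i hi => hL2 i (hs hi))
      (fun j hj => hL2 j (ht hj)) hindep,
    sum_congr rfl fun i hi => hmean i (hs hi), sum_congr rfl fun j hj => hmean j (ht hj),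
    sum_congr rfl fun i hi => hvar i (hs (mem_inter.mp hi).1)]

lemma integral_eq_sum_measureReal_mul_integral_of_indepFun {ι β : Type*} [MeasurableSpace ι]
    [MeasurableSingletonClass ι] [MeasurableSpace β] {κ : Ω → ι} {X : Ω → β}
    (hκ : Measurable κ) (hX : Measurable X) (hindep : κ ⟂ᵢ[P] X)
    {s : Finset ι} (hκs : ∀ ω, κ ω ∈ s) {F : ι → β → ℝ} (hF : ∀ k ∈ s, Measurable (F k))
    (hFint : ∀ k ∈ s, Integrable (fun ω => F k (X ω)) P) :
    ∫ ω, F (κ ω) (X ω) ∂P = ∑ k ∈ s, P.real (κ ⁻¹' {k}) * ∫ ω, F k (X ω) ∂P := by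
  classical
  have hsplit : ∀ ω, F (κ ω) (X ω) =
      ∑ k ∈ s, (κ ⁻¹' {k}).indicator 1 ω * F k (X ω) := by
    intro ω
    simp [Set.indicator_apply, hκs ω]
  have hterm : ∀ k ∈ s, ∫ ω, (κ ⁻¹' {k}).indicator 1 ω * F k (X ω) ∂P =
      P.real (κ ⁻¹' {k}) * ∫ ω, F k (X ω) ∂P := by
    intro k hk
    have hφ : Measurable (({k} : Set ι).indicator (1 : ι → ℝ)) :=
      measurable_one.indicator (measurableSet_singleton k)
    rw [← integral_indicator_one (hκ (measurableSet_singleton k))]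
    exact (hindep.comp hφ (hF k hk)).integral_fun_mul_eq_mul_integral
      (hφ.comp hκ).aestronglyMeasurable ((hF k hk).comp hX).aestronglyMeasurable
  have hint : ∀ k ∈ s, Integrable (fun ω => (κ ⁻¹' {k}).indicator 1 ω * F k (X ω)) P := by
    intro k hk
    refine (hFint k hk).bdd_mul (c := 1) ?_ (ae_of_all _ fun ω => ?_)
    · exact (measurable_one.indicator (hκ (measurableSet_singleton k))).aestronglyMeasurable
    · by_cases h : ω ∈ κ ⁻¹' {k} <;> simp [h]
  simp_rw [hsplit]
  rw [integral_finsetSum s hint]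
  exact sum_congr rfl hterm

end ProbabilityTheory

lemma sum_Icc_mul_sum_Icc_succ_eq_sum_Icc {R : Type*} [CommSemiring R] (w a : ℕ → R) (n : ℕ) :
    ∑ k ∈ Icc 1 (n - 1), w k * ∑ j ∈ Icc (k + 1) n, a j =
      ∑ j ∈ Icc 1 n, (∑ k ∈ Icc 1 (j - 1), w k) * a j := by
  simp only [mul_sum, sum_mul]
  exact sum_comm' fun k j => by simp only [mem_Icc]; omega

lemma sum_Icc_inv_succ_mul_succ_succ {j : ℕ} (hj : 1 ≤ j) :
    ∑ k ∈ Icc 1 (j - 1), ((k + 1 : ℝ) * (k + 2))⁻¹ = 2⁻¹ - ((j : ℝ) + 1)⁻¹ := by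
  induction j, hj using Nat.le_induction with
  | base => norm_num
  | succ m hm ih =>
    rw [Nat.add_sub_cancel, ← Nat.sub_add_cancel hm, sum_Icc_succ_top (by omega),
      Nat.sub_add_cancel hm, ih]
    push_cast
    field_simp
    ring

lemma sum_Icc_sub_inv_succ_div (n : ℕ) :
    ∑ j ∈ Icc 1 n, (2⁻¹ - ((j : ℝ) + 1)⁻¹) / j =
      (∑ j ∈ Icc 1 n, (j : ℝ)⁻¹) / 2 - 1 + ((n : ℝ) + 1)⁻¹ := by
  induction n with
  | zero => norm_num
  | succ m ih =>
    rw [sum_Icc_succ_top (by omega), sum_Icc_succ_top (by omega), ih]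
    push_cast
    field_simp
    ring

lemma sum_Icc_sub_inv_succ_div_sq (n : ℕ) :
    ∑ j ∈ Icc 1 n, (2⁻¹ - ((j : ℝ) + 1)⁻¹) / (j : ℝ) ^ 2 =
      1 - ((n : ℝ) + 1)⁻¹ - (∑ j ∈ Icc 1 n, ((j : ℝ) ^ 2)⁻¹) / 2 := by
  induction n with
  | zero => norm_num
  | succ m ih =>
    rw [sum_Icc_succ_top (by omega), sum_Icc_succ_top (by omega), ih]
    push_cast
    field_simp
    ring

lemma sum_Icc_yule_weight_mul_cross_moment {n : ℕ} (hn : 2 ≤ n) (H1 H2 : ℝ)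
    (hH1 : H1 = ∑ i ∈ Icc 1 n, (i : ℝ)⁻¹) (hH2 : H2 = ∑ i ∈ Icc 1 n, ((i : ℝ) ^ 2)⁻¹) :
    ∑ k ∈ Icc 1 (n - 1), 2 * ((n : ℝ) + 1) / ((n : ℝ) - 1) * ((k + 1 : ℝ) * (k + 2))⁻¹ *
        (H1 * ∑ j ∈ Icc (k + 1) n, (j : ℝ)⁻¹ + ∑ j ∈ Icc (k + 1) n, ((j : ℝ) ^ 2)⁻¹) =
      ((n : ℝ) + 1) / ((n : ℝ) - 1) * (H1 ^ 2 - H2) -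
        2 * (n : ℝ) / ((n : ℝ) - 1) * (H1 - 1) := by
  have hn1 : (n : ℝ) - 1 ≠ 0 := (sub_pos.mpr (by exact_mod_cast hn)).ne'
  have hinner : ∀ j ∈ Icc 1 n, (∑ k ∈ Icc 1 (j - 1), ((k + 1 : ℝ) * (k + 2))⁻¹) *
      (H1 * (j : ℝ)⁻¹ + ((j : ℝ) ^ 2)⁻¹) =
        H1 * ((2⁻¹ - ((j : ℝ) + 1)⁻¹) / j) + (2⁻¹ - ((j : ℝ) + 1)⁻¹) / (j : ℝ) ^ 2 := by
    intro j hj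
    rw [sum_Icc_inv_succ_mul_succ_succ (mem_Icc.mp hj).1]
    ring
  calc _ = 2 * ((n : ℝ) + 1) / ((n : ℝ) - 1) * ∑ k ∈ Icc 1 (n - 1), ((k + 1 : ℝ) * (k + 2))⁻¹ *
          ∑ j ∈ Icc (k + 1) n, (H1 * (j : ℝ)⁻¹ + ((j : ℝ) ^ 2)⁻¹) := by
        simp only [mul_sum, sum_add_distrib, mul_assoc]
    _ = 2 * ((n : ℝ) + 1) / ((n : ℝ) - 1) *
          (H1 * ∑ j ∈ Icc 1 n, (2⁻¹ - ((j : ℝ) + 1)⁻¹) / j +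
            ∑ j ∈ Icc 1 n, (2⁻¹ - ((j : ℝ) + 1)⁻¹) / (j : ℝ) ^ 2) := by
        rw [sum_Icc_mul_sum_Icc_succ_eq_sum_Icc, sum_congr rfl hinner, sum_add_distrib, mul_sum]
    _ = _ := by
        rw [sum_Icc_sub_inv_succ_div, sum_Icc_sub_inv_succ_div_sq, ← hH1, ← hH2]
        field_simp
        ring

theorem cross_moment_height_coalescent
    {Ω : Type*} [MeasurableSpace Ω] {P : Measure Ω} [IsProbabilityMeasure P]
    (n : ℕ) (hn : 2 ≤ n)
    (T : ℕ → Ω → ℝ) (κ : Ω → ℕ)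
    (hTmeas : ∀ i, Measurable (T i)) (hκmeas : Measurable κ)
    (hTindep : iIndepFun T P)
    (hTdist : ∀ i ∈ Finset.Icc 1 n, P.map (T i) = expMeasure i)
    (hκrange : ∀ ω, κ ω ∈ Finset.Icc 1 (n - 1))
    (hκdist : ∀ k ∈ Finset.Icc 1 (n - 1),
      P {ω | κ ω = k} =
        ENNReal.ofReal ((2 * ((n : ℝ) + 1) / ((n : ℝ) - 1)) *
          (1 / (((k : ℝ) + 1) * ((k : ℝ) + 2)))))
    (hindep : IndepFun κ (fun ω i => T i ω) P)
    (H1 H2 : ℝ)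
    (hH1 : H1 = ∑ i ∈ Finset.Icc 1 n, (1 : ℝ) / i)
    (hH2 : H2 = ∑ i ∈ Finset.Icc 1 n, (1 : ℝ) / (i : ℝ) ^ 2) :
    ∫ ω, (∑ i ∈ Finset.Icc 1 n, T i ω) * (∑ i ∈ Finset.Icc (κ ω + 1) n, T i ω) ∂P =
      ((n : ℝ) + 1) / ((n : ℝ) - 1) * (H1 ^ 2 - H2) - 2 * (n : ℝ) / ((n : ℝ) - 1) * (H1 - 1) := by
  simp only [one_div] at hH1 hH2 hκdist
  have hpos : ∀ i ∈ Icc 1 n, (0 : ℝ) < i := fun i hi => Nat.cast_pos.mpr (mem_Icc.mp hi).1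
  have hlaw : ∀ i ∈ Icc 1 n, HasLaw (T i) (expMeasure i) P :=
    fun i hi => ⟨(hTmeas i).aemeasurable, hTdist i hi⟩
  have hL2 : ∀ i ∈ Icc 1 n, MemLp (T i) 2 P :=
    fun i hi => (hlaw i hi).memLp_two_of_expMeasure_s8 (hpos i hi)
  have hsub : ∀ k, Icc (k + 1) n ⊆ Icc 1 n := fun k => Icc_subset_Icc (by omega) le_rfl
  have hcross : ∀ k, ∫ ω, (∑ i ∈ Icc 1 n, T i ω) * (∑ j ∈ Icc (k + 1) n, T j ω) ∂P =
      H1 * ∑ j ∈ Icc (k + 1) n, (j : ℝ)⁻¹ + ∑ j ∈ Icc (k + 1) n, ((j : ℝ) ^ 2)⁻¹ := by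
    intro k
    have hunion : Icc 1 n ∪ Icc (k + 1) n ⊆ Icc 1 n := union_subset Subset.rfl (hsub k)
    rw [hH1, integral_sum_mul_sum_of_hasLaw_expMeasure (X := T) (r := fun i : ℕ => (i : ℝ))
      (fun i hi => hpos i (hunion hi)) (fun i hi => hlaw i (hunion hi))
      fun i j hij => hTindep.indepFun hij, inter_eq_right.mpr (hsub k)]
  have hprob : ∀ k ∈ Icc 1 (n - 1), P.real (κ ⁻¹' {k}) =
      2 * ((n : ℝ) + 1) / ((n : ℝ) - 1) * ((k + 1 : ℝ) * (k + 2))⁻¹ := by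
    intro k hk
    have hn1 : (0 : ℝ) < n - 1 := sub_pos.mpr (by exact_mod_cast hn)
    rw [measureReal_def, show κ ⁻¹' {k} = {ω | κ ω = k} from rfl, hκdist k hk,
      ENNReal.toReal_ofReal (by positivity)]
  rw [integral_eq_sum_measureReal_mul_integral_of_indepFun hκmeas
      (measurable_pi_lambda _ hTmeas) hindep hκrange
      (F := fun k v => (∑ i ∈ Icc 1 n, v i) * ∑ j ∈ Icc (k + 1) n, v j) (fun _ _ => by fun_prop)
      fun k _ => (memLp_finsetSum _ hL2).integrable_mul
        (memLp_finsetSum _ fun j hj => hL2 j (hsub k hj)),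
    sum_congr rfl fun k hk => by rw [hprob k hk, hcross k]]
  exact sum_Icc_yule_weight_mul_cross_moment hn H1 H2 hH1 hH2
end
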